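/- arXiv:1104.3508 — 2 statements merged into one kernel-verified Lean document; each statement's English description precedes it below -/
import Mathlib

section
/- Let l be a nonnegative integer, m ∈ ℤ, and λ = l(l−1)/2. Define ₁F₁(a; b; z) = Σ_{n=0}^∞ ((a)_n / (b)_n) zⁿ/n! (Pochhammer rising factorials; the series converges for all z ∈ ℂ since b = l + 1/2 > 0), and define Ψ_{m,l} : ℝ² → ℂ by Ψ_{m,l}(θ,y) = e^{−i m θ/2} e^{−y²/2} y^l · ₁F₁( (1 + 2l − m)/4 ; l + 1/2 ; y² ). Then Ψ_{m,l} is smooth on ℝ² and satisfies 2i y² ∂_θ Ψ_{m,l} + y² ∂_y² Ψ_{m,l} − y⁴ Ψ_{m,l} = 2λ Ψ_{m,l} everywhere on ℝ². -/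
open Complex

/-- The confluent hypergeometric function
`₁F₁(a;b;z) = Σ_{n≥0} ((a)_n/(b)_n) zⁿ/n!` (Pochhammer rising factorials). -/
noncomputable def oneFone (a b z : ℂ) : ℂ :=
  ∑' n : ℕ, ((ascPochhammer ℂ n).eval a / (ascPochhammer ℂ n).eval b) * z ^ n
    / (n.factorial : ℂ)

/-- The weight-`m` `K`-finite vector
`Ψ_{m,l}(θ,y) = e^{-imθ/2} e^{-y²/2} y^l ₁F₁((1+2l-m)/4; l+1/2; y²)`. -/
noncomputable def Psi (m : ℤ) (l : ℕ) (θ y : ℝ) : ℂ :=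
  Complex.exp (-I * (m : ℂ) * (θ : ℂ) / 2) * Complex.exp (-(y : ℂ) ^ 2 / 2)
    * (y : ℂ) ^ l
    * oneFone ((1 + 2 * (l : ℂ) - (m : ℂ)) / 4) ((l : ℂ) + 1/2) ((y : ℂ) ^ 2)

/-- Partial derivative in the first variable `θ`. -/
noncomputable def pderivT (F : ℝ → ℝ → ℂ) (θ y : ℝ) : ℂ := deriv (fun θ' => F θ' y) θ

/-- Second partial derivative in the second variable `y`. -/
noncomputable def pderivXX (F : ℝ → ℝ → ℂ) (θ y : ℝ) : ℂ :=
  deriv (deriv (fun y' => F θ y')) y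

set_option maxHeartbeats 1000000

namespace CasimirAux

/-- Sum of a power series with coefficients `s`. -/
noncomputable def S (s : ℕ → ℂ) (z : ℂ) : ℂ := ∑' n : ℕ, s n * z ^ n

/-- Coefficients of the termwise derivative. -/
noncomputable def sh (s : ℕ → ℂ) : ℕ → ℂ := fun n => ((n + 1 : ℕ) : ℂ) * s (n + 1)

/-- Factorial majorization of coefficients. -/
def Maj (s : ℕ → ℂ) (K D : ℝ) : Prop := ∀ n : ℕ, ‖s n‖ ≤ K * D ^ n / n.factorial

lemma Maj.summable_aux {s : ℕ → ℂ} {K D : ℝ} (h : Maj s K D) (r : ℝ) (hr : 0 ≤ r) :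
    Summable fun n : ℕ => ‖s n‖ * r ^ n := by
  refine Summable.of_nonneg_of_le (fun n => by positivity) (fun n => ?_)
    ((Real.summable_pow_div_factorial (D * r)).mul_left K)
  calc ‖s n‖ * r ^ n ≤ K * D ^ n / n.factorial * r ^ n :=
        mul_le_mul_of_nonneg_right (h n) (by positivity)
    _ = K * ((D * r) ^ n / n.factorial) := by rw [mul_pow]; ring

lemma Maj.summable {s : ℕ → ℂ} {K D : ℝ} (h : Maj s K D) (z : ℂ) :
    Summable fun n : ℕ => s n * z ^ n := by
  refine Summable.of_norm ((h.summable_aux ‖z‖ (norm_nonneg z)).congr fun n => ?_)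
  rw [norm_mul, norm_pow]

lemma Maj.sh {s : ℕ → ℂ} {K D : ℝ} (hD : 0 ≤ D) (h : Maj s K D) :
    Maj (CasimirAux.sh s) (K * D) D := by
  intro n
  have h1 := h (n + 1)
  have hn : ‖CasimirAux.sh s n‖ = ((n : ℝ) + 1) * ‖s (n + 1)‖ := by
    rw [CasimirAux.sh, norm_mul, Complex.norm_natCast]; push_cast; ring
  have hfac : (((n+1).factorial : ℝ)) = ((n:ℝ)+1) * n.factorial := by
    push_cast [Nat.factorial_succ]; ring
  have hf0 : (n.factorial : ℝ) ≠ 0 := by positivity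
  rw [hn]
  calc ((n : ℝ) + 1) * ‖s (n+1)‖ ≤ ((n:ℝ)+1) * (K * D ^ (n+1) / (n+1).factorial) := by
        apply mul_le_mul_of_nonneg_left h1 (by positivity)
    _ = K * D * D ^ n / n.factorial := by
        rw [hfac, pow_succ]
        field_simp

lemma Maj.hasDerivAt {s : ℕ → ℂ} {K D : ℝ} (hD : 0 ≤ D) (h : Maj s K D) (z : ℂ) :
    HasDerivAt (S s) (S (CasimirAux.sh s) z) z := by
  set R : ℝ := ‖z‖ + 1 with hRdef
  have hR : 0 < R := by positivity
  have hzR : z ∈ Metric.ball (0 : ℂ) R := by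
    simp only [Metric.mem_ball, dist_zero_right, hRdef]
    linarith
  set u : ℕ → ℝ := fun n => (n : ℝ) * (K * D ^ n * R ^ (n-1) / n.factorial) with hu
  have husum : Summable u := by
    rw [← summable_nat_add_iff 1]
    have e : (fun n : ℕ => u (n + 1)) = fun n : ℕ => (K * D) * ((D * R) ^ n / n.factorial) := by
      funext n
      have hfac : (((n+1).factorial : ℝ)) = ((n:ℝ)+1) * n.factorial := by
        push_cast [Nat.factorial_succ]; ring
      have hf0 : (n.factorial : ℝ) ≠ 0 := by positivity
      simp only [hu, Nat.add_sub_cancel]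
      rw [hfac, pow_succ, mul_pow]
      push_cast
      field_simp
    rw [e]
    exact (Real.summable_pow_div_factorial (D * R)).mul_left _
  have hbound : ∀ (n : ℕ) (w : ℂ), w ∈ Metric.ball (0:ℂ) R →
      ‖s n * ((n : ℂ) * w ^ (n-1))‖ ≤ u n := by
    intro n w hw
    have hwR : ‖w‖ ≤ R := le_of_lt (by simpa [dist_zero_right] using hw)
    rcases n with _ | k
    · simp [hu]
    · simp only [hu, Nat.add_sub_cancel]
      rw [norm_mul, norm_mul, norm_pow, Complex.norm_natCast]
      have h1 := h (k+1)
      have hstep : ‖s (k+1)‖ * (((k:ℝ)+1) * ‖w‖^k)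
          ≤ (K * D^(k+1) / (k+1).factorial) * (((k:ℝ)+1) * R^k) := by
        apply mul_le_mul h1 ?_ (by positivity) ((norm_nonneg _).trans h1)
        exact mul_le_mul_of_nonneg_left (pow_le_pow_left₀ (norm_nonneg _) hwR k) (by positivity)
      calc ‖s (k+1)‖ * (((k+1:ℕ):ℝ) * ‖w‖^k)
          ≤ (K * D^(k+1) / (k+1).factorial) * (((k:ℝ)+1) * R^k) := by
            push_cast
            exact hstep
        _ = ((k+1:ℕ):ℝ) * (K * D ^ (k+1) * R ^ k / (k+1).factorial) := by
            push_cast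
            ring
  have key := hasDerivAt_tsum_of_isPreconnected husum Metric.isOpen_ball
    (convex_ball (0:ℂ) R).isPreconnected
    (g := fun n (w : ℂ) => s n * w ^ n) (g' := fun n (w : ℂ) => s n * ((n : ℂ) * w ^ (n-1)))
    (fun n w _ => (hasDerivAt_pow n w).const_mul (s n))
    (fun n w hw => hbound n w hw) hzR (h.summable z) hzR
  have hsum2 : Summable fun n : ℕ => s n * ((n:ℂ) * z ^ (n-1)) := by
    rw [← summable_nat_add_iff 1]
    refine ((h.sh hD).summable z).congr fun n => ?_
    simp only [CasimirAux.sh, Nat.add_sub_cancel]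
    push_cast
    ring
  have heq : (∑' n : ℕ, s n * ((n:ℂ) * z ^ (n-1))) = S (CasimirAux.sh s) z := by
    rw [Summable.tsum_eq_zero_add hsum2]
    simp only [Nat.cast_zero, zero_mul, mul_zero, zero_add]
    refine tsum_congr fun n => ?_
    simp only [CasimirAux.sh, Nat.add_sub_cancel]
    push_cast
    ring
  rw [← heq]
  exact key

lemma Maj.contDiff {s : ℕ → ℂ} {K D : ℝ} (h : Maj s K D) : ContDiff ℂ ⊤ (S s) := by
  have hrad : (FormalMultilinearSeries.ofScalars ℂ s).radius = ⊤ := by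
    apply FormalMultilinearSeries.radius_eq_top_of_summable_norm
    intro r
    refine (h.summable_aux r r.coe_nonneg).congr fun n => ?_
    rw [FormalMultilinearSeries.ofScalars_norm]
  have hball : HasFPowerSeriesOnBall (FormalMultilinearSeries.ofScalars ℂ s).sum
      (FormalMultilinearSeries.ofScalars ℂ s) 0 ⊤ := by
    have := (FormalMultilinearSeries.ofScalars ℂ s).hasFPowerSeriesOnBall
      (by rw [hrad]; exact ENNReal.zero_lt_top)
    rwa [hrad] at this
  have hS : S s = (FormalMultilinearSeries.ofScalars ℂ s).sum := by
    funext z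
    rw [S, FormalMultilinearSeries.sum]
    refine tsum_congr fun n => ?_
    rw [FormalMultilinearSeries.ofScalars_apply_eq, smul_eq_mul]
  rw [hS]
  apply AnalyticOnNhd.contDiff
  intro x _
  refine hball.analyticAt_of_mem ?_
  simp only [EMetric.mem_ball]
  exact edist_lt_top x 0


section Concrete
variable (l : ℕ) (m : ℤ)

noncomputable def aa : ℂ := (1 + 2 * (l : ℂ) - (m : ℂ)) / 4
noncomputable def bb : ℂ := (l : ℂ) + 1/2
noncomputable def tt : ℕ → ℂ := fun n =>
  (ascPochhammer ℂ n).eval (aa l m) / (ascPochhammer ℂ n).eval (bb l) / (n.factorial : ℂ)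

lemma bb_re (n : ℕ) : (bb l + (n : ℂ)).re = (l : ℝ) + 1/2 + n := by
  simp [bb, Complex.add_re, Complex.natCast_re]

lemma bb_add_ne (n : ℕ) : bb l + (n : ℂ) ≠ 0 := by
  intro hc
  have h1 := bb_re l n
  rw [hc] at h1
  simp only [Complex.zero_re] at h1
  have : (0:ℝ) ≤ (l:ℝ) := Nat.cast_nonneg l
  have : (0:ℝ) ≤ (n:ℝ) := Nat.cast_nonneg n
  linarith

lemma bb_norm_ge (n : ℕ) : (n : ℝ) + 1/2 ≤ ‖bb l + (n : ℂ)‖ := by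
  have h1 : (bb l + (n : ℂ)).re ≤ ‖bb l + (n : ℂ)‖ := by
    exact Complex.re_le_norm _
  have h2 := bb_re l n
  have : (0:ℝ) ≤ (l:ℝ) := Nat.cast_nonneg l
  linarith

lemma pocha_ne (n : ℕ) : (ascPochhammer ℂ n).eval (bb l) ≠ 0 := by
  induction n with
  | zero => simp [ascPochhammer_zero]
  | succ k ih =>
    rw [ascPochhammer_succ_eval]
    exact mul_ne_zero ih (bb_add_ne l k)

lemma tt_zero : tt l m 0 = 1 := by
  simp [tt, ascPochhammer_zero]

lemma tt_rec (n : ℕ) :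
    (bb l + (n:ℂ)) * ((n:ℂ) + 1) * tt l m (n+1) = (aa l m + (n:ℂ)) * tt l m n := by
  have h1 := pocha_ne l n
  have h2 := bb_add_ne l n
  have h3 : ((n.factorial : ℂ)) ≠ 0 := Nat.cast_ne_zero.mpr (Nat.factorial_ne_zero n)
  have h5 : ((n:ℂ)+1) ≠ 0 := Nat.cast_add_one_ne_zero n
  have hfs : (((n+1).factorial : ℂ)) = ((n:ℂ)+1) * (n.factorial : ℂ) := by
    push_cast [Nat.factorial_succ]; ring
  rw [tt, tt, ascPochhammer_succ_eval, ascPochhammer_succ_eval, hfs]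
  field_simp

lemma tt_maj : Maj (tt l m) 1 (2 * ‖aa l m‖ + 2) := by
  intro n
  set A := ‖aa l m‖ with hA
  have hA0 : 0 ≤ A := norm_nonneg _
  set C := 2 * A + 2 with hC
  have hC0 : (0:ℝ) < C := by positivity
  induction n with
  | zero => simp [tt_zero]
  | succ k ih =>
    have hrec := tt_rec l m k
    have hbk := bb_add_ne l k
    have hk1 : ((k:ℂ)+1) ≠ 0 := Nat.cast_add_one_ne_zero k
    have htt : tt l m (k+1) = (aa l m + (k:ℂ)) * tt l m k / ((bb l + (k:ℂ)) * ((k:ℂ)+1)) := by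
      field_simp
      linear_combination hrec
    have hfac : (((k+1).factorial : ℝ)) = ((k:ℝ)+1) * k.factorial := by
      push_cast [Nat.factorial_succ]; ring
    have hf0 : (0:ℝ) < (k.factorial : ℝ) := by positivity
    have h1 : ‖aa l m + (k:ℂ)‖ ≤ A + k := by
      calc ‖aa l m + (k:ℂ)‖ ≤ A + ‖(k:ℂ)‖ := norm_add_le _ _
        _ = A + k := by rw [Complex.norm_natCast]
    have h2 := bb_norm_ge l k
    have h3 : ‖((k:ℂ)+1)‖ = (k:ℝ)+1 := by
      rw [show ((k:ℂ)+1) = ((k+1:ℕ):ℂ) by push_cast; ring, Complex.norm_natCast]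
      push_cast; ring
    rw [htt, norm_div, norm_mul, norm_mul, h3]
    have hden : (0:ℝ) < ((k:ℝ) + 1/2) * ((k:ℝ)+1) := by positivity
    have hden' : (0:ℝ) < ‖bb l + (k:ℂ)‖ * ((k:ℝ)+1) := by
      have : (0:ℝ) < ‖bb l + (k:ℂ)‖ := lt_of_lt_of_le (by positivity) h2
      positivity
    have ihb : ‖tt l m k‖ ≤ C ^ k / k.factorial := by
      simpa using ih
    calc ‖aa l m + (k:ℂ)‖ * ‖tt l m k‖ / (‖bb l + (k:ℂ)‖ * ((k:ℝ)+1))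
        ≤ (A + k) * (C ^ k / k.factorial) / (((k:ℝ) + 1/2) * ((k:ℝ)+1)) := by
          apply div_le_div₀ (by positivity)
            (mul_le_mul h1 ihb (norm_nonneg _) (by positivity)) hden
          exact mul_le_mul_of_nonneg_right h2 (by positivity)
      _ ≤ (C * ((k:ℝ) + 1/2)) * (C ^ k / k.factorial) / (((k:ℝ) + 1/2) * ((k:ℝ)+1)) := by
          have key : A + (k:ℝ) ≤ C * ((k:ℝ) + 1/2) := by nlinarith [Nat.cast_nonneg (α := ℝ) k]
          gcongr
      _ = 1 * C ^ (k+1) / (k+1).factorial := by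
          rw [hfac, pow_succ, one_mul]
          have hhalf : ((k:ℝ) + 1/2) ≠ 0 := by positivity
          have hk1' : ((k:ℝ) + 1) ≠ 0 := by positivity
          field_simp

lemma kummer (z : ℂ) :
    z * S (sh (sh (tt l m))) z + (bb l - z) * S (sh (tt l m)) z - aa l m * S (tt l m) z = 0 := by
  set C := 2 * ‖aa l m‖ + 2 with hC
  have hC0 : (0:ℝ) ≤ C := by positivity
  have hM0 := tt_maj l m
  have hM1 := hM0.sh hC0
  have hM2 := hM1.sh hC0
  have s0 := hM0.summable z
  have s1 := hM1.summable z
  have s2 := hM2.summable z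
  have s1' : Summable fun n : ℕ => sh (tt l m) n * z^(n+1) := by
    refine (s1.mul_right z).congr fun n => ?_
    rw [pow_succ]; ring
  have s2' : Summable fun n : ℕ => sh (sh (tt l m)) n * z^(n+1) := by
    refine (s2.mul_right z).congr fun n => ?_
    rw [pow_succ]; ring
  have s1s : Summable fun n : ℕ => sh (tt l m) (n+1) * z^(n+1) :=
    (summable_nat_add_iff 1).mpr s1
  have s0s : Summable fun n : ℕ => tt l m (n+1) * z^(n+1) :=
    (summable_nat_add_iff 1).mpr s0
  have e1 : z * S (sh (sh (tt l m))) z = ∑' n : ℕ, sh (sh (tt l m)) n * z^(n+1) := by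
    rw [S, ← tsum_mul_left]
    exact tsum_congr fun n => by rw [pow_succ]; ring
  have e3 : z * S (sh (tt l m)) z = ∑' n : ℕ, sh (tt l m) n * z^(n+1) := by
    rw [S, ← tsum_mul_left]
    exact tsum_congr fun n => by rw [pow_succ]; ring
  have e2 : bb l * S (sh (tt l m)) z
      = bb l * sh (tt l m) 0 + ∑' n : ℕ, bb l * (sh (tt l m) (n+1) * z^(n+1)) := by
    rw [S, ← tsum_mul_left, Summable.tsum_eq_zero_add (s1.mul_left (bb l))]
    simp
  have e4 : aa l m * S (tt l m) z
      = aa l m * tt l m 0 + ∑' n : ℕ, aa l m * (tt l m (n+1) * z^(n+1)) := by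
    rw [S, ← tsum_mul_left, Summable.tsum_eq_zero_add (s0.mul_left (aa l m))]
    simp
  have hconst : bb l * sh (tt l m) 0 = aa l m * tt l m 0 := by
    have h0 := tt_rec l m 0
    simp only [sh]
    push_cast at h0 ⊢
    simp only [Nat.cast_zero, add_zero, zero_add] at h0
    linear_combination h0
  have hterm : ∀ n : ℕ, sh (sh (tt l m)) n * z^(n+1) + bb l * (sh (tt l m) (n+1) * z^(n+1))
      = sh (tt l m) n * z^(n+1) + aa l m * (tt l m (n+1) * z^(n+1)) := by
    intro n
    have hr := tt_rec l m (n+1)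
    push_cast at hr
    simp only [sh]
    push_cast
    linear_combination z^(n+1) * hr
  have hsum : (∑' n : ℕ, sh (sh (tt l m)) n * z^(n+1))
        + (∑' n : ℕ, bb l * (sh (tt l m) (n+1) * z^(n+1)))
      = (∑' n : ℕ, sh (tt l m) n * z^(n+1))
        + ∑' n : ℕ, aa l m * (tt l m (n+1) * z^(n+1)) := by
    rw [← Summable.tsum_add s2' (s1s.mul_left _), ← Summable.tsum_add s1' (s0s.mul_left _)]
    exact tsum_congr hterm
  have expand : (bb l - z) * S (sh (tt l m)) z
      = bb l * S (sh (tt l m)) z - z * S (sh (tt l m)) z := by ring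
  rw [expand, e1, e2, e3, e4]
  linear_combination hsum + hconst


end Concrete

section Concrete
variable (l : ℕ) (m : ℤ)

/-- `h(z) = e^{-z/2}·F(z)`. -/
noncomputable def hh (z : ℂ) : ℂ := Complex.exp (-z/2) * S (tt l m) z
noncomputable def hh1 (z : ℂ) : ℂ :=
  Complex.exp (-z/2) * (S (sh (tt l m)) z - S (tt l m) z / 2)
noncomputable def hh2 (z : ℂ) : ℂ :=
  Complex.exp (-z/2) * (S (sh (sh (tt l m))) z - S (sh (tt l m)) z + S (tt l m) z / 4)

lemma hC0 : (0:ℝ) ≤ 2 * ‖aa l m‖ + 2 := by positivity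

lemma hasDerivAt_exp_neg_half (z : ℂ) :
    HasDerivAt (fun w : ℂ => Complex.exp (-w/2)) (-(Complex.exp (-z/2))/2) z := by
  have h1 : HasDerivAt (fun w : ℂ => -w/2) (-1/2) z := by
    simpa using ((hasDerivAt_id z).neg.div_const 2)
  have := (Complex.hasDerivAt_exp (-z/2)).comp z h1
  refine this.congr_deriv ?_
  ring

lemma hasDerivAt_hh (z : ℂ) : HasDerivAt (hh l m) (hh1 l m z) z := by
  have hF := (tt_maj l m).hasDerivAt (hC0 l m) z
  have := (hasDerivAt_exp_neg_half z).mul hF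
  refine this.congr_deriv ?_
  rw [hh1]; ring

lemma hasDerivAt_hh1 (z : ℂ) : HasDerivAt (hh1 l m) (hh2 l m z) z := by
  have hF := (tt_maj l m).hasDerivAt (hC0 l m) z
  have hF1 := ((tt_maj l m).sh (hC0 l m)).hasDerivAt (hC0 l m) z
  have := (hasDerivAt_exp_neg_half z).mul (hF1.sub (hF.div_const 2))
  refine this.congr_deriv ?_
  rw [hh2, Pi.sub_apply]; ring

lemma kummer_hh (z : ℂ) :
    4 * z * hh2 l m z + (4 * (l:ℂ) + 2) * hh1 l m z + ((m:ℂ) - z) * hh l m z = 0 := by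
  have hk := kummer l m z
  rw [aa, bb] at hk
  rw [hh, hh1, hh2]
  linear_combination (4 * Complex.exp (-z/2)) * hk

lemma oneFone_eq (z : ℂ) : oneFone (aa l m) (bb l) z = S (tt l m) z := by
  refine tsum_congr fun n => ?_
  rw [tt]
  ring

/-- `G(y) = y^l·h(y²)` and its first two derivative expressions. -/
noncomputable def GG (y : ℝ) : ℂ := ((y:ℂ))^l * hh l m ((y:ℂ)^2)
noncomputable def GG1 (y : ℝ) : ℂ :=
  (l:ℂ) * (((y:ℂ))^(l-1) * hh l m ((y:ℂ)^2)) + 2 * (((y:ℂ))^(l+1) * hh1 l m ((y:ℂ)^2))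
noncomputable def GG2 (y : ℝ) : ℂ :=
  (l:ℂ) * ((((l-1 : ℕ)):ℂ) * ((y:ℂ))^(l-1-1) * hh l m ((y:ℂ)^2)
      + 2 * ((y:ℂ))^((l-1)+1) * hh1 l m ((y:ℂ)^2))
    + 2 * ((((l+1 : ℕ)):ℂ) * ((y:ℂ))^((l+1)-1) * hh1 l m ((y:ℂ)^2)
      + 2 * ((y:ℂ))^((l+1)+1) * hh2 l m ((y:ℂ)^2))

lemma hasDerivAt_pow_mul (k : ℕ) (ψ ψ' : ℂ → ℂ) (hψ : ∀ z, HasDerivAt ψ (ψ' z) z) (y : ℝ) :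
    HasDerivAt (fun x : ℝ => ((x:ℂ))^k * ψ ((x:ℂ)^2))
      ((k:ℂ) * ((y:ℂ))^(k-1) * ψ ((y:ℂ)^2) + 2 * ((y:ℂ))^(k+1) * ψ' ((y:ℂ)^2)) y := by
  have H : HasDerivAt (fun w : ℂ => w^k * ψ (w^2))
      (((k:ℂ) * ((y:ℂ))^(k-1)) * ψ (((y:ℂ))^2) + ((y:ℂ))^k * (ψ' (((y:ℂ))^2) * (2 * ((y:ℂ))^1)))
      ((y:ℝ) : ℂ) :=
    (hasDerivAt_pow k _).mul ((hψ _).comp _ (hasDerivAt_pow 2 _))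
  have := H.comp_ofReal
  convert this using 1
  rw [pow_succ]
  ring

lemma hasDerivAt_GG (y : ℝ) : HasDerivAt (GG l m) (GG1 l m y) y := by
  have := hasDerivAt_pow_mul l (hh l m) (hh1 l m) (hasDerivAt_hh l m) y
  refine this.congr_deriv ?_
  rw [GG1]; ring

lemma hasDerivAt_GG1 (y : ℝ) : HasDerivAt (GG1 l m) (GG2 l m y) y := by
  have hA := (hasDerivAt_pow_mul (l-1) (hh l m) (hh1 l m) (hasDerivAt_hh l m) y).const_mul (l:ℂ)
  have hB := (hasDerivAt_pow_mul (l+1) (hh1 l m) (hh2 l m) (hasDerivAt_hh1 l m) y).const_mul (2:ℂ)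
  have := hA.add hB
  exact this.congr_deriv rfl

lemma Psi_eq (θ y : ℝ) :
    Complex.exp (-I * (m : ℂ) * (θ : ℂ) / 2) * Complex.exp (-(y : ℂ) ^ 2 / 2)
        * (y : ℂ) ^ l
        * oneFone ((1 + 2 * (l : ℂ) - (m : ℂ)) / 4) ((l : ℂ) + 1/2) ((y : ℂ) ^ 2)
      = Complex.exp (-I * (m : ℂ) * (θ : ℂ) / 2) * GG l m y := by
  have h1 := oneFone_eq l m ((y:ℂ)^2)
  rw [aa, bb] at h1
  rw [h1, GG, hh]
  ring


end Concrete
end CasimirAux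

open CasimirAux in
/-- `Ψ_{m,l}` is smooth and satisfies `Ω''Ψ = 2λΨ`, i.e.
`2i y² ∂_θΨ + y² ∂_y²Ψ - y⁴ Ψ = 2λ Ψ`, with `λ = l(l-1)/2`. -/
theorem Psi_solves_casimir_eigenproblem (l : ℕ) (m : ℤ)
    (lam : ℂ) (hlam : lam = (l : ℂ) * ((l : ℂ) - 1) / 2) :
    ContDiff ℝ (⊤ : ℕ∞) (fun p : ℝ × ℝ => Psi m l p.1 p.2) ∧
    ∀ θ y : ℝ,
      2 * I * (y : ℂ) ^ 2 * pderivT (Psi m l) θ y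
          + (y : ℂ) ^ 2 * pderivXX (Psi m l) θ y
          - (y : ℂ) ^ 4 * Psi m l θ y
        = 2 * lam * Psi m l θ y := by
  constructor
  · -- smoothness
    have hF : ContDiff ℂ ⊤ (S (tt l m)) := (tt_maj l m).contDiff
    have hre : ContDiff ℝ (⊤ : ℕ∞) (fun p : ℝ × ℝ => ((p.1 : ℝ) : ℂ)) :=
      Complex.ofRealCLM.contDiff.comp contDiff_fst
    have him : ContDiff ℝ (⊤ : ℕ∞) (fun p : ℝ × ℝ => ((p.2 : ℝ) : ℂ)) :=
      Complex.ofRealCLM.contDiff.comp contDiff_snd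
    have h1 : ContDiff ℝ (⊤ : ℕ∞) (fun p : ℝ × ℝ => Complex.exp (-I * (m:ℂ) * (p.1:ℂ) / 2)) :=
      (Complex.contDiff_exp (𝕜 := ℝ)).comp ((contDiff_const.mul hre).div_const 2)
    have h2 : ContDiff ℝ (⊤ : ℕ∞) (fun p : ℝ × ℝ => Complex.exp (-(p.2:ℂ)^2 / 2)) :=
      (Complex.contDiff_exp (𝕜 := ℝ)).comp (((him.pow 2).neg).div_const 2)
    have h3 : ContDiff ℝ (⊤ : ℕ∞) (fun p : ℝ × ℝ => ((p.2:ℂ))^l) := him.pow l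
    have h4 : ContDiff ℝ (⊤ : ℕ∞) (fun p : ℝ × ℝ =>
        oneFone ((1 + 2*(l:ℂ) - (m:ℂ))/4) ((l:ℂ) + 1/2) ((p.2:ℂ)^2)) := by
      have heq : (fun p : ℝ × ℝ => oneFone ((1 + 2*(l:ℂ) - (m:ℂ))/4) ((l:ℂ)+1/2) ((p.2:ℂ)^2))
          = fun p : ℝ × ℝ => S (tt l m) ((p.2:ℂ)^2) := by
        funext p
        have h := oneFone_eq l m ((p.2:ℂ)^2)
        rwa [aa, bb] at h
      rw [heq]
      exact ((hF.restrict_scalars ℝ).of_le le_top).comp (him.pow 2)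
    have := ((h1.mul h2).mul h3).mul h4
    simp only [Psi]
    exact this
  · -- the differential equation
    intro θ y
    have hrwPsi : ∀ θ' y' : ℝ, Psi m l θ' y'
        = Complex.exp (-I*(m:ℂ)*(θ':ℂ)/2) * GG l m y' := by
      intro θ' y'
      rw [Psi]
      exact Psi_eq l m θ' y'
    have hT : pderivT (Psi m l) θ y
        = (-I*(m:ℂ)/2) * (Complex.exp (-I*(m:ℂ)*(θ:ℂ)/2) * GG l m y) := by
      rw [pderivT]
      have hfun : (fun θ' : ℝ => Psi m l θ' y)
          = fun θ' : ℝ => Complex.exp (-I*(m:ℂ)*(θ':ℂ)/2) * GG l m y :=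
        funext fun θ' => hrwPsi θ' y
      rw [hfun]
      have harg : HasDerivAt (fun w : ℂ => -I*(m:ℂ)*w/2) (-I*(m:ℂ)/2) ((θ:ℝ):ℂ) := by
        simpa using (((hasDerivAt_id ((θ:ℝ):ℂ)).const_mul (-I*(m:ℂ))).div_const 2)
      have hc : HasDerivAt (fun w : ℂ => Complex.exp (-I*(m:ℂ)*w/2))
          (Complex.exp (-I*(m:ℂ)*(θ:ℂ)/2) * (-I*(m:ℂ)/2)) ((θ:ℝ):ℂ) :=
        (Complex.hasDerivAt_exp _).comp _ harg
      rw [((hc.comp_ofReal).mul_const (GG l m y)).deriv]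
      ring
    have hXX : pderivXX (Psi m l) θ y
        = Complex.exp (-I*(m:ℂ)*(θ:ℂ)/2) * GG2 l m y := by
      rw [pderivXX]
      have hfun : (fun y' : ℝ => Psi m l θ y')
          = fun y' : ℝ => Complex.exp (-I*(m:ℂ)*(θ:ℂ)/2) * GG l m y' :=
        funext fun y' => hrwPsi θ y'
      rw [hfun]
      have hd1 : deriv (fun y' : ℝ => Complex.exp (-I*(m:ℂ)*(θ:ℂ)/2) * GG l m y')
          = fun y' : ℝ => Complex.exp (-I*(m:ℂ)*(θ:ℂ)/2) * GG1 l m y' := by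
        funext y'
        exact ((hasDerivAt_GG l m y').const_mul _).deriv
      rw [hd1]
      exact ((hasDerivAt_GG1 l m y).const_mul _).deriv
    have hH := kummer_hh l m ((y:ℂ)^2)
    rw [hT, hXX, hrwPsi θ y, hlam]
    set E := Complex.exp (-I*(m:ℂ)*(θ:ℂ)/2) with hE
    simp only [GG, GG2]
    rcases l with _ | _ | n
    · push_cast at hH ⊢
      norm_num
      linear_combination (E * (y:ℂ)^2) * hH
        + (-(m:ℂ) * (y:ℂ)^2 * E * hh 0 m ((y:ℂ)^2)) * Complex.I_mul_I
    · push_cast at hH ⊢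
      norm_num
      linear_combination (E * (y:ℂ)^3) * hH
        + (-(m:ℂ) * (y:ℂ)^3 * E * hh 1 m ((y:ℂ)^2)) * Complex.I_mul_I
    · have e1 : n + 2 - 1 = n + 1 := rfl
      have e2 : n + 2 - 1 - 1 = n := rfl
      have e3 : n + 2 + 1 - 1 = n + 2 := rfl
      simp only [e1, e2, e3]
      push_cast at hH ⊢
      linear_combination (E * (y:ℂ)^(n+4)) * hH
        + (-(m:ℂ) * (y:ℂ)^(n+4) * E * hh (n+2) m ((y:ℂ)^2)) * Complex.I_mul_I
end

section
/- Let l be a nonnegative integer and m ∈ ℤ. Define ₁F₁(a; b; z) = Σ_{n=0}^∞ ((a)_n / (b)_n) zⁿ/n!, Ψ_{m,l}(θ,y) = e^{−i m θ/2} e^{−y²/2} y^l · ₁F₁( (1 + 2l − m)/4 ; l + 1/2 ; y² ), and for smooth F : ℝ² → ℂ define the raising operator (η⁺ F)(θ,y) = (1/2) e^{−2iθ} ( −y ∂_y F(θ,y) − i ∂_θ F(θ,y) + (y² − 1/2) F(θ,y) ). Then for all (θ,y) ∈ ℝ²: (η⁺ Ψ_{m,l})(θ,y) = −((2l + 1 +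 m)/4) · Ψ_{m+4,l}(θ,y). In particular η⁺ annihilates Ψ_{−(2l+1),l}(θ,y) = e^{i(2l+1)θ/2} e^{y²/2} y^l, the highest weight vector. -/
/-!
On `Ψ_{m,l} = e^{-imθ/2} f(y)` the operator `η⁺` only sees the weight `m` and the radial
factor `f`, through `y f'(y)`. For `f(y) = e^{-y²/2} y^l M(a,b,y²)` with `M = ₁F₁`, the derivative
of `M` is eliminated by Kummer's contiguous relation
`z M'(a,b,z) = (z + a - b) M(a,b,z) + (b - a) M(a-1,b,z)`.
At `a = (1+2l-m)/4`, `b = l + 1/2` the multiples of `M(a,b,y²)` cancel, leaving a multiple of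
`M(a-1,b,y²)`, which is the radial factor of `Ψ_{m+4,l}`. The highest weight vector comes from
`M(b,b,z) = e^z`.
-/

open Complex

/-- Partial derivative in the second variable `y`. -/
noncomputable def pderivY (F : ℝ → ℝ → ℂ) (θ y : ℝ) : ℂ := deriv (fun y' => F θ y') y

/-- The raising operator
`(η⁺F)(θ,y) = (1/2) e^{-2iθ} (-y ∂_yF - i ∂_θF + (y² - 1/2) F)`. -/
noncomputable def etaPlus (F : ℝ → ℝ → ℂ) (θ y : ℝ) : ℂ :=
  (1/2 : ℂ) * Complex.exp (-2 * I * (θ : ℂ))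
    * (-(y : ℂ) * pderivY F θ y - I * pderivT F θ y
        + ((y : ℂ) ^ 2 - 1/2) * F θ y)

open Nat

section PowerSeries

variable {c : ℕ → ℂ} {K : ℝ}

lemma summable_mul_pow_of_norm_le (hc : ∀ n, ‖c n‖ ≤ K ^ n / n !) (z : ℂ) :
    Summable fun n => c n * z ^ n := by
  refine .of_norm_bounded (Real.summable_pow_div_factorial (K * ‖z‖)) fun n => ?_
  rw [norm_mul, norm_pow, mul_pow, mul_div_right_comm]
  exact mul_le_mul_of_nonneg_right (hc n) (by positivity)

lemma hasDerivAt_tsum_mul_pow_of_norm_le (hc : ∀ n, ‖c n‖ ≤ K ^ n / n !) (hK : 0 ≤ K) (z : ℂ) :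
    HasDerivAt (fun w => ∑' n, c n * w ^ n) (∑' n, c n * (n * z ^ (n - 1))) z := by
  set R := ‖z‖ + 1
  have hR : 1 ≤ R := by simp [R]
  have hbound : ∀ n, ∀ w ∈ Metric.ball (0 : ℂ) R,
      ‖c n * (n * w ^ (n - 1))‖ ≤ (2 * K * R) ^ n / n ! := by
    intro n w hw
    have hw : ‖w‖ ≤ R := (mem_ball_zero_iff.mp hw).le
    have hn : (n : ℝ) ≤ 2 ^ n := by exact_mod_cast (Nat.lt_two_pow_self).le
    have hpow : ‖w‖ ^ (n - 1) ≤ R ^ n :=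
      (pow_le_pow_left₀ (norm_nonneg w) hw _).trans (pow_le_pow_right₀ hR (by omega))
    calc ‖c n * (n * w ^ (n - 1))‖ = ‖c n‖ * (n * ‖w‖ ^ (n - 1)) := by simp
      _ ≤ K ^ n / n ! * (2 ^ n * R ^ n) := by gcongr; exact hc n
      _ = (2 * K * R) ^ n / n ! := by rw [mul_pow, mul_pow]; ring
  exact hasDerivAt_tsum_of_isPreconnected (Real.summable_pow_div_factorial (2 * K * R))
    Metric.isOpen_ball (convex_ball 0 R).isPreconnected
    (fun n w _ => by simpa using (hasDerivAt_pow n w).const_mul (c n)) hbound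
    (Metric.mem_ball_self (by positivity)) (summable_mul_pow_of_norm_le hc 0)
    (by simp [R])

end PowerSeries

section Kummer

variable {a b : ℂ}

noncomputable def hgCoeff (a b : ℂ) (n : ℕ) : ℂ :=
  (ascPochhammer ℂ n).eval a / (ascPochhammer ℂ n).eval b / n !

lemma oneFone_eq_tsum (a b z : ℂ) : oneFone a b z = ∑' n, hgCoeff a b n * z ^ n := by
  simp only [oneFone, hgCoeff]
  congr 1 with n
  ring

@[simp]
lemma hgCoeff_zero (a b : ℂ) : hgCoeff a b 0 = 1 := by
  simp [hgCoeff]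

lemma hgCoeff_succ (a b : ℂ) (n : ℕ) :
    hgCoeff a b (n + 1) = hgCoeff a b n * (a + n) / ((b + n) * (n + 1)) := by
  simp only [hgCoeff, ascPochhammer_succ_eval, factorial_succ]
  push_cast
  simp only [div_eq_mul_inv, mul_inv]
  ring

lemma hgCoeff_sub_one_succ (a b : ℂ) (n : ℕ) :
    hgCoeff (a - 1) b (n + 1) = hgCoeff a b n * (a - 1) / ((b + n) * (n + 1)) := by
  have hnum : (ascPochhammer ℂ (n + 1)).eval (a - 1) = (a - 1) * (ascPochhammer ℂ n).eval a := by
    simp [ascPochhammer_succ_left, Polynomial.eval_comp]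
  simp only [hgCoeff, hnum, ascPochhammer_succ_eval, factorial_succ]
  push_cast
  simp only [div_eq_mul_inv, mul_inv]
  ring

lemma hgCoeff_contiguous (a : ℂ) {n : ℕ} (hb : b ≠ -n) :
    (n + 1) * hgCoeff a b (n + 1) + (b - a) * (hgCoeff a b (n + 1) - hgCoeff (a - 1) b (n + 1))
      = hgCoeff a b n := by
  have hbn : b + n ≠ 0 := by rwa [Ne, add_eq_zero_iff_eq_neg]
  rw [hgCoeff_succ, hgCoeff_sub_one_succ]
  field_simp
  ring

lemma ne_neg_natCast_of_re_pos (hb : 0 < b.re) (k : ℕ) : b ≠ -k := by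
  rintro rfl
  simp only [neg_re, natCast_re, Left.neg_pos_iff] at hb
  linarith [(k.cast_nonneg : (0 : ℝ) ≤ k)]

lemma norm_hgCoeff_le (a : ℂ) (hb : 0 < b.re) (n : ℕ) :
    ‖hgCoeff a b n‖ ≤ (1 + ‖a‖ / b.re) ^ n / n ! := by
  induction n with
  | zero => simp
  | succ n ih =>
    have hratio : ‖a + n‖ ≤ (1 + ‖a‖ / b.re) * ‖b + n‖ := by
      have hre : b.re + n ≤ ‖b + n‖ := by
        simpa using Complex.re_le_norm (b + n)
      calc ‖a + n‖ ≤ ‖a‖ + n := by simpa using norm_add_le a n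
        _ ≤ (1 + ‖a‖ / b.re) * (b.re + n) := by
          field_simp
          nlinarith [norm_nonneg a, (n.cast_nonneg : (0 : ℝ) ≤ n)]
        _ ≤ (1 + ‖a‖ / b.re) * ‖b + n‖ := by gcongr
    have hbn : 0 < ‖b + n‖ := norm_pos_iff.mpr fun h =>
      ne_neg_natCast_of_re_pos hb n (eq_neg_of_add_eq_zero_left h)
    calc ‖hgCoeff a b (n + 1)‖ = ‖hgCoeff a b n‖ * (‖a + n‖ / ‖b + n‖) / (n + 1) := by
          rw [hgCoeff_succ, norm_div, norm_mul, norm_mul]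
          norm_cast
          field_simp
      _ ≤ (1 + ‖a‖ / b.re) ^ n / n ! * (1 + ‖a‖ / b.re) / (n + 1) := by
          gcongr
          exact (div_le_iff₀ hbn).mpr hratio
      _ = (1 + ‖a‖ / b.re) ^ (n + 1) / (n + 1)! := by
          rw [pow_succ, factorial_succ]
          push_cast
          field_simp

lemma summable_hgCoeff_mul_pow (a : ℂ) (hb : 0 < b.re) (z : ℂ) :
    Summable fun n => hgCoeff a b n * z ^ n :=
  summable_mul_pow_of_norm_le (norm_hgCoeff_le a hb) z

lemma hasDerivAt_oneFone (a : ℂ) (hb : 0 < b.re) (z : ℂ) :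
    HasDerivAt (oneFone a b) (∑' n, hgCoeff a b n * (n * z ^ (n - 1))) z := by
  rw [show oneFone a b = _ from funext (oneFone_eq_tsum a b)]
  exact hasDerivAt_tsum_mul_pow_of_norm_le (norm_hgCoeff_le a hb)
    (add_nonneg zero_le_one (div_nonneg (norm_nonneg a) hb.le)) z

lemma hasSum_contiguous (a : ℂ) (hb : 0 < b.re) (z : ℂ) :
    HasSum (fun n : ℕ => (n * hgCoeff a b n + (b - a) * (hgCoeff a b n - hgCoeff (a - 1) b n))
      * z ^ n) (z * oneFone a b z) := by
  -- the constant term vanishes, and by `hgCoeff_contiguous` the shifted series is `z * oneFone a b z`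
  refine (hasSum_nat_add_iff' 1).mp ?_
  simp only [Finset.range_one, Finset.sum_singleton, hgCoeff_zero, cast_zero, cast_add, cast_one,
    sub_self, mul_zero, add_zero, pow_zero, mul_one, sub_zero]
  have hterm : ∀ n : ℕ, ((n + 1) * hgCoeff a b (n + 1)
      + (b - a) * (hgCoeff a b (n + 1) - hgCoeff (a - 1) b (n + 1))) * z ^ (n + 1)
      = z * (hgCoeff a b n * z ^ n) := fun n => by
    rw [hgCoeff_contiguous a (ne_neg_natCast_of_re_pos hb n), pow_succ]
    ring
  simpa only [hterm, oneFone_eq_tsum] using (summable_hgCoeff_mul_pow a hb z).hasSum.mul_left z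

lemma mul_deriv_oneFone (a : ℂ) (hb : 0 < b.re) (z : ℂ) :
    z * deriv (oneFone a b) z = (z + a - b) * oneFone a b z + (b - a) * oneFone (a - 1) b z := by
  have hzD : z * deriv (oneFone a b) z = ∑' n : ℕ, n * hgCoeff a b n * z ^ n := by
    rw [(hasDerivAt_oneFone a hb z).deriv, ← tsum_mul_left]
    congr 1 with n
    cases n with
    | zero => simp
    | succ n => push_cast; ring
  have hsum := (hasSum_contiguous a hb z).sub
    (((summable_hgCoeff_mul_pow a hb z).hasSum.sub
      (summable_hgCoeff_mul_pow (a - 1) hb z).hasSum).mul_left (b - a))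
  rw [← oneFone_eq_tsum, ← oneFone_eq_tsum] at hsum
  rw [hzD]
  convert hsum.tsum_eq using 1
  · congr 1 with n
    ring
  · ring

lemma oneFone_self (hb : ∀ k : ℕ, b ≠ -k) (z : ℂ) : oneFone b b z = Complex.exp z := by
  rw [oneFone_eq_tsum, Complex.exp_eq_exp_ℂ, NormedSpace.exp_eq_tsum_div]
  congr 1 with n
  have hpoch : (ascPochhammer ℂ n).eval b ≠ 0 := by
    rw [Ne, ascPochhammer_eval_eq_zero_iff]
    rintro ⟨k, -, hk⟩
    exact hb k (by rw [hk, neg_neg])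
  rw [hgCoeff, div_self hpoch]
  ring

end Kummer

lemma etaPlus_exp_mul (m : ℂ) (f : ℝ → ℂ) (θ y : ℝ) :
    etaPlus (fun θ y => exp (-I * m * θ / 2) * f y) θ y
      = exp (-I * (m + 4) * θ / 2) / 2 * (-(y * deriv f y) + (y ^ 2 - (m + 1) / 2) * f y) := by
  have hθ : HasDerivAt (fun θ : ℝ => exp (-I * m * θ / 2))
      (exp (-I * m * θ / 2) * (-I * m / 2)) θ := by
    simpa using ((((hasDerivAt_id (θ : ℂ)).const_mul (-I * m)).div_const 2).cexp).comp_ofReal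
  have hexp : exp (-I * (m + 4) * θ / 2) = exp (-I * m * θ / 2) * exp (-2 * I * θ) := by
    rw [← exp_add]
    ring_nf
  rw [etaPlus, pderivT, pderivY, (hθ.mul_const (f y)).deriv, deriv_const_mul_field, hexp]
  linear_combination (exp (-2 * I * θ) * exp (-I * m * θ / 2) * m * f y / 4) * I_sq

lemma mul_deriv_gaussian_mul_oneFone (a : ℂ) {b : ℂ} (hb : 0 < b.re) (l : ℕ) (y : ℝ) :
    y * deriv (fun y : ℝ => exp (-(y : ℂ) ^ 2 / 2) * (y : ℂ) ^ l * oneFone a b ((y : ℂ) ^ 2)) y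
      = exp (-(y : ℂ) ^ 2 / 2) * (y : ℂ) ^ l * ((y ^ 2 + 2 * a - 2 * b + l) * oneFone a b (y ^ 2)
        + 2 * (b - a) * oneFone (a - 1) b (y ^ 2)) := by
  have hsq : HasDerivAt (fun y : ℝ => (y : ℂ) ^ 2) (2 * y) y := by
    simpa using (hasDerivAt_pow 2 (y : ℂ)).comp_ofReal
  have hX : HasDerivAt (fun y : ℝ => exp (-(y : ℂ) ^ 2 / 2)) (exp (-(y : ℂ) ^ 2 / 2) * -y) y := by
    refine (hsq.neg.div_const 2).cexp.congr_deriv ?_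
    simp only [Pi.neg_apply]
    ring
  have hY : HasDerivAt (fun y : ℝ => (y : ℂ) ^ l) (l * (y : ℂ) ^ (l - 1)) y := by
    simpa using (hasDerivAt_pow l (y : ℂ)).comp_ofReal
  have hΦ : HasDerivAt (fun y : ℝ => oneFone a b ((y : ℂ) ^ 2))
      (deriv (oneFone a b) ((y : ℂ) ^ 2) * (2 * y)) y :=
    (hasDerivAt_oneFone a hb _).differentiableAt.hasDerivAt.comp (h₂ := oneFone a b) y hsq
  have hl : (y : ℂ) * (l * (y : ℂ) ^ (l - 1)) = l * (y : ℂ) ^ l := by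
    rcases l.eq_zero_or_pos with rfl | hl
    · simp
    · rw [mul_left_comm, mul_pow_sub_one hl.ne']
  have hP : HasDerivAt
      (fun y : ℝ => exp (-(y : ℂ) ^ 2 / 2) * (y : ℂ) ^ l * oneFone a b ((y : ℂ) ^ 2)) _ y :=
    (hX.mul hY).mul hΦ
  rw [hP.deriv, Pi.mul_apply]
  linear_combination
    (2 * exp (-(y : ℂ) ^ 2 / 2) * (y : ℂ) ^ l) * mul_deriv_oneFone a hb ((y : ℂ) ^ 2)
    + (exp (-(y : ℂ) ^ 2 / 2) * oneFone a b ((y : ℂ) ^ 2)) * hl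

lemma natCast_add_half_re_pos (l : ℕ) : 0 < ((l : ℂ) + 1 / 2).re := by
  simp only [one_div, add_re, natCast_re, inv_re, re_ofNat, normSq_ofNat, div_self_mul_self']
  positivity

lemma etaPlus_Psi (m : ℤ) (l : ℕ) (θ y : ℝ) :
    etaPlus (Psi m l) θ y = -((2 * (l : ℂ) + 1 + (m : ℂ)) / 4) * Psi (m + 4) l θ y := by
  set a : ℂ := (1 + 2 * (l : ℂ) - (m : ℂ)) / 4
  set b : ℂ := (l : ℂ) + 1 / 2
  have hb : 0 < b.re := natCast_add_half_re_pos l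
  have hΨ : Psi m l = fun θ y : ℝ => exp (-I * m * θ / 2)
      * (exp (-(y : ℂ) ^ 2 / 2) * (y : ℂ) ^ l * oneFone a b ((y : ℂ) ^ 2)) := by
    funext θ y
    simp only [Psi, a, b, mul_assoc]
  have ha : (1 + 2 * (l : ℂ) - ((m + 4 : ℤ) : ℂ)) / 4 = a - 1 := by
    push_cast
    ring
  rw [hΨ, etaPlus_exp_mul, mul_deriv_gaussian_mul_oneFone a hb, Psi, ha]
  push_cast
  ring

lemma Psi_highestWeight (l : ℕ) (θ y : ℝ) :
    Psi (-(2 * (l : ℤ) + 1)) l θ y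
      = exp (I * (2 * (l : ℂ) + 1) * θ / 2) * exp ((y : ℂ) ^ 2 / 2) * (y : ℂ) ^ l := by
  have hb : ∀ k : ℕ, (l : ℂ) + 1 / 2 ≠ -k :=
    ne_neg_natCast_of_re_pos (natCast_add_half_re_pos l)
  have ha : (1 + 2 * (l : ℂ) - ((-(2 * (l : ℤ) + 1) : ℤ) : ℂ)) / 4 = l + 1 / 2 := by
    push_cast
    ring
  have hexp : exp ((y : ℂ) ^ 2 / 2) = exp (-(y : ℂ) ^ 2 / 2) * exp ((y : ℂ) ^ 2) := by
    rw [← exp_add]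
    ring_nf
  rw [Psi, ha, oneFone_self hb, hexp]
  push_cast
  ring_nf

/-- `η⁺ Ψ_{m,l} = -((2l+1+m)/4) Ψ_{m+4,l}`; in particular `η⁺` annihilates the
highest weight vector `Ψ_{-(2l+1),l}(θ,y) = e^{i(2l+1)θ/2} e^{y²/2} y^l`. -/
theorem etaPlus_action (l : ℕ) (m : ℤ) :
    (∀ θ y : ℝ,
      etaPlus (Psi m l) θ y
        = -((2 * (l : ℂ) + 1 + (m : ℂ)) / 4) * Psi (m + 4) l θ y) ∧
    (∀ θ y : ℝ, etaPlus (Psi (-(2 * (l : ℤ) + 1)) l) θ y = 0) ∧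
    (∀ θ y : ℝ,
      Psi (-(2 * (l : ℤ) + 1)) l θ y
        = Complex.exp (I * (2 * (l : ℂ) + 1) * (θ : ℂ) / 2)
            * Complex.exp ((y : ℂ) ^ 2 / 2) * (y : ℂ) ^ l) := by
  refine ⟨etaPlus_Psi m l, fun θ y => ?_, Psi_highestWeight l⟩
  rw [etaPlus_Psi]
  push_cast
  ring
end
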